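/- For a graph G on n vertices, the second smallest signless Laplacian eigenvalue satisfies γ_{n−1}(G) ≤ d_{n−1}(G) + 1, where d_{n−1}(G) is the second smallest vertex degree; moreover if equality holds then d_{n−1}(G) = dₙ(G). -/

import Mathlib

/-!
Let `γ` be the second smallest eigenvalue of `Q = D + A` and let `u`, `v` be vertices carrying the
two smallest degrees `d_{n-1} = deg u ≥ d_n = deg v`. At most one eigenvalue of `Q` lies below
`γ`, so the plane spanned by `e_u`, `e_v` contains a nonzero `x` orthogonal to the eigenvectors of
those eigenvalues, and then `γ ‖x‖² ≤ ⟪Q x, x⟫` (the easy half of Courant–Fischer). For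
`x = a e_u + b e_v` we get `⟪Q x, x⟫ = a² d_{n-1} + 2ab Q_{uv} + b² d_n` with `Q_{uv} ∈ {0, 1}`,
and `2ab Q_{uv} ≤ a² + b²` gives `γ ≤ d_{n-1} + 1`. In case of equality `b ≠ 0`, which forces
`d_n = d_{n-1}`.
-/

open Matrix SimpleGraph Polynomial

/-- The signless Laplacian matrix Q(G) = D(G) + A(G). -/
noncomputable def signlessLaplacian {V : Type*} [Fintype V] [DecidableEq V]
    (G : SimpleGraph V) [DecidableRel G.Adj] : Matrix V V ℝ :=
  Matrix.diagonal (fun v => (G.degree v : ℝ)) + G.adjMatrix ℝ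

/-- Eigenvalues (roots of the characteristic polynomial, with multiplicity),
sorted in non-increasing order. -/
noncomputable def eigsDesc {V : Type*} [Fintype V] [DecidableEq V] (M : Matrix V V ℝ) : List ℝ :=
  (M.charpoly.roots.sort (· ≤ ·)).reverse

/-- Vertex degrees sorted in non-increasing order. -/
noncomputable def degsDesc {V : Type*} [Fintype V] [DecidableEq V]
    (G : SimpleGraph V) [DecidableRel G.Adj] : List ℕ :=
  ((Finset.univ.val.map fun v => G.degree v).sort (· ≤ ·)).reverse

open Module Finset

namespace LinearMap.IsSymmetric

variable {𝕜 E : Type*} [RCLike 𝕜] [NormedAddCommGroup E] [InnerProductSpace 𝕜 E]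
  [FiniteDimensional 𝕜 E] {T : E →ₗ[𝕜] E} {n : ℕ}

theorem re_inner_apply_self_eq_sum (hT : T.IsSymmetric) (hn : finrank 𝕜 E = n) (x : E) :
    RCLike.re (inner 𝕜 (T x) x) =
      ∑ i, hT.eigenvalues hn i * ‖(hT.eigenvectorBasis hn).repr x i‖ ^ 2 := by
  rw [← (hT.eigenvectorBasis hn).repr.inner_map_map, PiLp.inner_apply, map_sum]
  refine sum_congr rfl fun i _ => ?_
  rw [hT.eigenvectorBasis_apply_self_apply, RCLike.inner_apply, map_mul (starRingEnd 𝕜),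
    RCLike.conj_ofReal, mul_left_comm, RCLike.mul_conj]
  norm_cast

theorem exists_ne_zero_mem_le_re_inner (hT : T.IsSymmetric) (hn : finrank 𝕜 E = n) {γ : ℝ}
    {W : Submodule 𝕜 E} (hW : #{i | hT.eigenvalues hn i < γ} < finrank 𝕜 W) :
    ∃ x ∈ W, x ≠ 0 ∧ γ * ‖x‖ ^ 2 ≤ RCLike.re (inner 𝕜 (T x) x) := by
  set J : Finset (Fin n) := {i | hT.eigenvalues hn i < γ}
  -- the coordinates along the eigenvectors in `J` are fewer than `finrank W` linear constraints
  let f : W →ₗ[𝕜] J → 𝕜 := LinearMap.pi fun i =>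
    (EuclideanSpace.proj (𝕜 := 𝕜) (i : Fin n)).toLinearMap ∘ₗ
      (hT.eigenvectorBasis hn).repr.toLinearMap ∘ₗ W.subtype
  obtain ⟨⟨x, hxW⟩, hx, hx0⟩ := Submodule.exists_mem_ne_zero_of_ne_bot
    (f.ker_ne_bot_of_finrank_lt (by simpa using hW))
  have hxJ : ∀ i ∈ J, (hT.eigenvectorBasis hn).repr x i = 0 := fun i hi => congrFun hx ⟨i, hi⟩
  refine ⟨x, hxW, by simpa using hx0, ?_⟩
  rw [hT.re_inner_apply_self_eq_sum hn, ← (hT.eigenvectorBasis hn).repr.norm_map,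
    EuclideanSpace.norm_sq_eq, mul_sum]
  refine sum_le_sum fun i _ => ?_
  by_cases hi : i ∈ J
  · simp [hxJ i hi]
  · exact mul_le_mul_of_nonneg_right (by simpa [J] using hi) (sq_nonneg _)

end LinearMap.IsSymmetric

theorem Antitone.card_filter_lt_le {n : ℕ} {α : Type*} [LinearOrder α] {f : Fin n → α}
    (hf : Antitone f) (k : Fin n) : #{i | f i < f k} ≤ n - 1 - k := by
  rw [← Fin.card_Ioi]
  refine card_le_card fun i hi => mem_Ioi.2 ?_
  by_contra hik
  exact (mem_filter.1 hi).2.not_ge (hf (not_lt.1 hik))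

theorem Matrix.IsHermitian.reverse_sort_roots_charpoly {n : Type*} [Fintype n] [DecidableEq n]
    {A : Matrix n n ℝ} (hA : A.IsHermitian) :
    (A.charpoly.roots.sort (· ≤ ·)).reverse = List.ofFn hA.eigenvalues₀ := by
  rw [← List.reverse_reverse (List.ofFn _)]
  congr 1
  refine List.Perm.eq_of_sortedLE ?_ hA.eigenvalues₀_antitone.sortedGE_ofFn.reverse ?_
  · exact List.sortedLE_iff_pairwise.2 (Multiset.pairwise_sort _ _)
  · rw [← Multiset.coe_eq_coe, Multiset.sort_eq, hA.roots_charpoly_eq_eigenvalues₀,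
      RCLike.ofReal_real_eq_id, Function.id_comp, Multiset.coe_reverse, Fin.univ_val_map]

theorem exists_ne_eq_getD_reverse_sort {α β : Type*} [Fintype α] [DecidableEq α] [LinearOrder β]
    (f : α → β) (hα : 2 ≤ Fintype.card α) (d : β) :
    ∃ u v, u ≠ v ∧ f v ≤ f u ∧
      ((univ.val.map f).sort (· ≤ ·)).reverse.getD (Fintype.card α - 2) d = f u ∧
      ((univ.val.map f).sort (· ≤ ·)).reverse.getD (Fintype.card α - 1) d = f v := by
  have : Nonempty α := Fintype.card_pos_iff.1 (by omega)
  obtain ⟨v, -, hv⟩ := univ.exists_min_image f univ_nonempty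
  have hne : (univ.erase v).Nonempty := by
    rw [← card_pos, card_erase_of_mem (mem_univ v), card_univ]; omega
  obtain ⟨u, hu, hvu⟩ := (univ.erase v).exists_min_image f hne
  have hsplit : univ.val = v ::ₘ u ::ₘ ((univ.erase v).erase u).val := by
    rw [erase_val, Multiset.cons_erase hu, erase_val, Multiset.cons_erase (mem_univ v)]
  have hsort : (univ.val.map f).sort (· ≤ ·) =
      f v :: f u :: (((univ.erase v).erase u).val.map f).sort (· ≤ ·) := by
    rw [hsplit, Multiset.map_cons, Multiset.map_cons, Multiset.sort_cons, Multiset.sort_cons]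
    · simp only [Multiset.mem_map, forall_exists_index, and_imp, forall_apply_eq_imp_iff₂]
      exact fun w hw => hvu w (mem_of_mem_erase hw)
    · simp only [Multiset.mem_cons, Multiset.mem_map, forall_eq_or_imp, forall_exists_index,
        and_imp, forall_apply_eq_imp_iff₂]
      exact ⟨hv u (mem_univ u), fun w _ => hv w (mem_univ w)⟩
  obtain ⟨m, hm⟩ := Nat.exists_eq_add_of_le' hα
  have hrest : ((((univ.erase v).erase u).val.map f).sort (· ≤ ·)).reverse.length = m := by
    rw [List.length_reverse, Multiset.length_sort, Multiset.card_map, card_val,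
      card_erase_of_mem hu, card_erase_of_mem (mem_univ v), card_univ, hm]; rfl
  refine ⟨u, v, ne_of_mem_erase hu, hv u (mem_univ u), ?_, ?_⟩
  all_goals
    rw [hsort, List.reverse_cons, List.reverse_cons, List.append_assoc,
      List.getD_append_right _ _ _ _ (by omega), hrest, hm]
    simp

theorem Matrix.inner_toEuclideanLin_add_single {n : Type*} [Fintype n] [DecidableEq n]
    (A : Matrix n n ℝ) (u v : n) (a b : ℝ) :
    inner ℝ (toEuclideanLin A (a • EuclideanSpace.single u 1 + b • EuclideanSpace.single v 1))
        (a • EuclideanSpace.single u 1 + b • EuclideanSpace.single v 1) =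
      a ^ 2 * A u u + a * b * (A u v + A v u) + b ^ 2 * A v v := by
  simp only [map_add, map_smul, inner_add_left, inner_add_right, inner_smul_left,
    inner_smul_right, EuclideanSpace.inner_single_right, toLpLin_apply]
  simp [Matrix.mulVec_single]
  ring

theorem EuclideanSpace.norm_add_single_sq {n : Type*} [Fintype n] [DecidableEq n]
    {u v : n} (huv : u ≠ v) (a b : ℝ) :
    ‖a • EuclideanSpace.single u (1 : ℝ) + b • EuclideanSpace.single v 1‖ ^ 2 = a ^ 2 + b ^ 2 := by
  rw [← real_inner_self_eq_norm_sq]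
  simp only [inner_add_left, inner_add_right, inner_smul_left,
    inner_smul_right, EuclideanSpace.inner_single_right]
  simp [huv, huv.symm]
  ring

theorem EuclideanSpace.finrank_span_single_pair {n : Type*} [Fintype n] [DecidableEq n]
    {u v : n} (huv : u ≠ v) :
    finrank ℝ (Submodule.span ℝ {EuclideanSpace.single u (1 : ℝ), EuclideanSpace.single v 1}) =
      2 := by
  have h : LinearIndependent ℝ ![EuclideanSpace.single u (1 : ℝ), EuclideanSpace.single v 1] := by
    rw [LinearIndependent.pair_iff]
    intro s t hst
    have hu := congr($hst u)
    have hv := congr($hst v)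
    simp [huv, huv.symm] at hu hv
    exact ⟨hu, hv⟩
  rw [← Matrix.range_cons_cons_empty _ _ ![], finrank_span_eq_card h, Fintype.card_fin]

theorem le_add_one_of_le_quadratic {γ a b c d q : ℝ} (hab : 0 < a ^ 2 + b ^ 2) (hc : |c| ≤ 2)
    (hq : q ≤ d) (h : γ * (a ^ 2 + b ^ 2) ≤ a ^ 2 * d + a * b * c + b ^ 2 * q) :
    γ ≤ d + 1 ∧ (γ = d + 1 → q = d) := by
  obtain ⟨hc₁, hc₂⟩ := abs_le.1 hc
  have hcross : a * b * c ≤ a ^ 2 + b ^ 2 := by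
    rcases le_total 0 (a * b) with hab' | hab'
    · nlinarith [sq_nonneg (a - b)]
    · nlinarith [sq_nonneg (a + b)]
  refine ⟨le_of_mul_le_mul_right (by nlinarith) hab, fun hγ => ?_⟩
  subst hγ
  rcases eq_or_ne b 0 with rfl | hb
  · nlinarith
  · have : 0 < b ^ 2 := by positivity
    nlinarith

theorem isHermitian_signlessLaplacian {V : Type*} [Fintype V] [DecidableEq V]
    (G : SimpleGraph V) [DecidableRel G.Adj] : (signlessLaplacian G).IsHermitian :=
  (isHermitian_diagonal _).add (G.isHermitian_adjMatrix ℝ)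

@[simp]
theorem signlessLaplacian_apply_self {V : Type*} [Fintype V] [DecidableEq V]
    (G : SimpleGraph V) [DecidableRel G.Adj] (v : V) : signlessLaplacian G v v = G.degree v := by
  simp [signlessLaplacian]

theorem abs_signlessLaplacian_apply_add_apply_le {V : Type*} [Fintype V] [DecidableEq V]
    (G : SimpleGraph V) [DecidableRel G.Adj] {u v : V} (huv : u ≠ v) :
    |signlessLaplacian G u v + signlessLaplacian G v u| ≤ 2 := by
  simp only [signlessLaplacian, Matrix.add_apply, diagonal_apply_ne _ huv,
    diagonal_apply_ne _ huv.symm, adjMatrix_apply, G.adj_comm v u]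
  split_ifs <;> norm_num

theorem stmt_16 {V : Type*} [Fintype V] [DecidableEq V] (G : SimpleGraph V)
    [DecidableRel G.Adj] (hn : 2 ≤ Fintype.card V) :
    (eigsDesc (signlessLaplacian G)).getD (Fintype.card V - 2) 0
        ≤ ((degsDesc G).getD (Fintype.card V - 2) 0 : ℝ) + 1 ∧
      ((eigsDesc (signlessLaplacian G)).getD (Fintype.card V - 2) 0
          = ((degsDesc G).getD (Fintype.card V - 2) 0 : ℝ) + 1 →
        (degsDesc G).getD (Fintype.card V - 2) 0
          = (degsDesc G).getD (Fintype.card V - 1) 0) := by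
  have hQ := isHermitian_signlessLaplacian G
  obtain ⟨u, v, huv, hvu, hu, hv⟩ := exists_ne_eq_getD_reverse_sort (G.degree ·) hn 0
  have hγ : (eigsDesc (signlessLaplacian G)).getD (Fintype.card V - 2) 0 =
      hQ.eigenvalues₀ ⟨Fintype.card V - 2, by omega⟩ := by
    rw [eigsDesc, hQ.reverse_sort_roots_charpoly, List.getD_eq_getElem _ _ (by simp; omega),
      List.getElem_ofFn]
  rw [degsDesc, hu, hv, hγ]
  have hJ := hQ.eigenvalues₀_antitone.card_filter_lt_le ⟨Fintype.card V - 2, by omega⟩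
  obtain ⟨x, hxW, hx0, hx⟩ :=
    (isSymmetric_toEuclideanLin_iff.mpr hQ).exists_ne_zero_mem_le_re_inner finrank_euclideanSpace
      (W := Submodule.span ℝ {EuclideanSpace.single u 1, EuclideanSpace.single v 1})
      (by rw [EuclideanSpace.finrank_span_single_pair huv]; exact hJ.trans_lt (by simp; omega))
  obtain ⟨a, b, rfl⟩ := Submodule.mem_span_pair.1 hxW
  rw [RCLike.re_to_real, Matrix.inner_toEuclideanLin_add_single,
    EuclideanSpace.norm_add_single_sq huv, signlessLaplacian_apply_self,
    signlessLaplacian_apply_self] at hx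
  have hab : 0 < a ^ 2 + b ^ 2 := by
    rw [← EuclideanSpace.norm_add_single_sq huv]; exact pow_pos (norm_pos_iff.2 hx0) 2
  obtain ⟨hle, heq⟩ := le_add_one_of_le_quadratic hab
    (abs_signlessLaplacian_apply_add_apply_le G huv) (Nat.cast_le.2 hvu) hx
  exact ⟨hle, fun h => (Nat.cast_injective (heq h)).symm⟩
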